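/- Let m be a positive integer and let α, β, γ, δ be indeterminates with q := 1 + βγ − αδ. Then (1/β) ∑_{r=1}^{m} ((−δ)^{r−1} [r−1]! / ∏_{p=1}^{r}(1 + βγ[p−1])) · α^r · ∑_{1≤b_1<⋯<b_r≤m} q^{∑_{p=1}^r (b_p − m)} = (α/β) ∑_{d=0}^{m−1} 1/(1 + βγ[d]). -/

import Mathlib

noncomputable section

/-- the field of rational functions over ℚ in indeterminates α, β, γ, δ -/
abbrev K4 : Type := FractionRing (MvPolynomial (Fin 4) ℚ)

def av : K4 := algebraMap (MvPolynomial (Fin 4) ℚ) K4 (MvPolynomial.X 0)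
def bv : K4 := algebraMap (MvPolynomial (Fin 4) ℚ) K4 (MvPolynomial.X 1)
def cv : K4 := algebraMap (MvPolynomial (Fin 4) ℚ) K4 (MvPolynomial.X 2)
def dv : K4 := algebraMap (MvPolynomial (Fin 4) ℚ) K4 (MvPolynomial.X 3)

/-- q := 1 + βγ − αδ -/
def qv : K4 := 1 + bv * cv - av * dv

/-- the q-integer [n] = (1 - q^n)/(1 - q) -/
def qint (n : ℕ) : K4 := (1 - qv ^ n) / (1 - qv)

/-- the q-factorial [k]! with [0]! = 1 -/
def qfact (k : ℕ) : K4 := ∏ a ∈ Finset.range k, qint (a + 1)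

/-!
Write `e_s(m)` for the elementary symmetric functions of `1, q⁻¹, …, q^(1-m)`: via `b ↦ m - b`
the inner sum over `b` is `e_r(m)`, and `(-δ)^(r-1) α^r = α (q - 1 - βγ)^(r-1)`. With
`D d = 1 + βγ[d]`, adjoining the new smallest element `q^(-m)` gives
`e_r(m+1) = e_r(m) + q^(-m) e_(r-1)(m)`, so the left-hand side telescopes in `m` once one knows
`F_0(m) = q^m / D m`, where
`F_k(m) = ∑_s (q - 1 - βγ)^s [s]! / (D 0 ⋯ D (s+k)) · e_s(m)`.
Adjoining instead the new largest element `1` (the old ones get scaled by `q⁻¹`) gives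
`F_k(m+1) = q D k F_(k+1)(m)`, because `D (s+k+1) + (q - 1 - βγ)[s+1] = q^(s+1) D k`; induction on
`m` then yields `F_k(m) = q^m / (D 0 ⋯ D (k-1) · D (k+m))`.
-/

open Finset MvPolynomial

@[to_additive sum_Icc_one_eq_sum_range]
theorem Finset.prod_Icc_one_eq_prod_range {M : Type*} [CommMonoid M] (f : ℕ → M) (n : ℕ) :
    ∏ i ∈ Icc 1 n, f i = ∏ i ∈ range n, f (i + 1) := by
  rw [← Ico_add_one_right_eq_Icc, prod_Ico_eq_prod_range]
  simp only [Nat.add_sub_cancel, add_comm 1]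

namespace Multiset

variable {R : Type*} [CommSemiring R]

@[simp]
theorem esymm_zero_right (s : Multiset R) : s.esymm 0 = 1 := by
  simp [esymm]

theorem esymm_eq_zero_of_card_lt {s : Multiset R} {n : ℕ} (h : card s < n) : s.esymm n = 0 := by
  simp [esymm, powersetCard_eq_empty n h]

theorem esymm_cons_succ (a : R) (s : Multiset R) (n : ℕ) :
    (a ::ₘ s).esymm (n + 1) = s.esymm (n + 1) + a * s.esymm n := by
  simp [esymm, powersetCard_cons, map_map, sum_map_mul_left]

theorem esymm_map_mul (c : R) (s : Multiset R) (n : ℕ) :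
    (s.map (c * ·)).esymm n = c ^ n * s.esymm n := by
  simpa using (pow_smul_esymm c n s).symm

theorem sum_range_mul_esymm_cons (w : ℕ → R) (a : R) (s : Multiset R) :
    ∑ i ∈ Finset.range (card s + 2), w i * (a ::ₘ s).esymm i =
      ∑ i ∈ Finset.range (card s + 1), (w i + a * w (i + 1)) * s.esymm i := by
  calc ∑ i ∈ Finset.range (card s + 2), w i * (a ::ₘ s).esymm i
      = (∑ i ∈ Finset.range (card s + 1), w (i + 1) * s.esymm (i + 1) + w 0 * s.esymm 0) +
          ∑ i ∈ Finset.range (card s + 1), w (i + 1) * (a * s.esymm i) := by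
        simp only [sum_range_succ' _ (card s + 1), esymm_cons_succ, esymm_zero_right, mul_add,
          sum_add_distrib]
        abel
    _ = ∑ i ∈ Finset.range (card s + 2), w i * s.esymm i +
          ∑ i ∈ Finset.range (card s + 1), w (i + 1) * (a * s.esymm i) := by
        rw [sum_range_succ' _ (card s + 1)]
    _ = _ := by
        rw [sum_range_succ _ (card s + 1), esymm_eq_zero_of_card_lt (Nat.lt_succ_self _), mul_zero,
          add_zero, ← sum_add_distrib]
        exact sum_congr rfl fun i _ => by ring

end Multiset

namespace QAnalog

section

-- `g` stands for `βγ`, so that `q - 1 - g` is `-αδ`.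
variable {K : Type*} [Field K] (q g : K)

def qNat (n : ℕ) : K := ∑ i ∈ range n, q ^ i

def qFactorial (n : ℕ) : K := ∏ a ∈ range n, qNat q (a + 1)

def qDenom (n : ℕ) : K := 1 + g * qNat q n

def qDenomProd (k : ℕ) : K := ∏ p ∈ range k, qDenom q g p

def weight (s k : ℕ) : K := (q - 1 - g) ^ s * qFactorial q s / qDenomProd q g (s + k + 1)

def invPowers (m : ℕ) : Multiset K := (Multiset.range m).map (q⁻¹ ^ ·)

def weightedEsymm (k m : ℕ) : K :=
  ∑ s ∈ range (m + 1), weight q g s k * (invPowers q m).esymm s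

theorem qNat_add (a b : ℕ) : qNat q (a + b) = qNat q a + q ^ a * qNat q b := by
  simp [qNat, sum_range_add, pow_add, mul_sum]

theorem qFactorial_succ (n : ℕ) : qFactorial q (n + 1) = qFactorial q n * qNat q (n + 1) :=
  prod_range_succ _ _

theorem qDenomProd_succ (k : ℕ) : qDenomProd q g (k + 1) = qDenomProd q g k * qDenom q g k :=
  prod_range_succ _ _

theorem qNat_mul_sub_one (n : ℕ) : qNat q n * (q - 1) = q ^ n - 1 := geom_sum_mul q n

theorem qDenom_add_add_one (s k : ℕ) :
    qDenom q g (s + k + 1) + (q - 1 - g) * qNat q (s + 1) = q ^ (s + 1) * qDenom q g k := by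
  rw [qDenom, qDenom, show s + k + 1 = s + 1 + k by ring, qNat_add]
  linear_combination qNat_mul_sub_one q (s + 1)

@[simp]
theorem card_invPowers (m : ℕ) : Multiset.card (invPowers q m) = m := by
  simp [invPowers]

theorem invPowers_succ (m : ℕ) : invPowers q (m + 1) = q⁻¹ ^ m ::ₘ invPowers q m := by
  simp [invPowers, Multiset.range_succ]

theorem invPowers_succ' (m : ℕ) :
    invPowers q (m + 1) = 1 ::ₘ (invPowers q m).map (q⁻¹ * ·) := by
  induction m with
  | zero => simp [invPowers]
  | succ m ih =>
    conv_lhs => rw [invPowers_succ, ih]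
    rw [invPowers_succ q m, Multiset.map_cons, pow_succ', Multiset.cons_swap]

variable {q g}

theorem weight_add_weight_succ (hD : ∀ n, qDenom q g n ≠ 0) (s k : ℕ) :
    weight q g s k + weight q g (s + 1) k = q ^ (s + 1) * qDenom q g k * weight q g s (k + 1) := by
  have hP : qDenomProd q g (s + k + 1) ≠ 0 := prod_ne_zero_iff.2 fun p _ => hD p
  rw [weight, weight, weight, show s + 1 + k + 1 = s + k + 1 + 1 by ring,
    show s + (k + 1) + 1 = s + k + 1 + 1 by ring, qDenomProd_succ _ _ (s + k + 1),
    qFactorial_succ, pow_succ]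
  field_simp [hD]
  linear_combination (q - 1 - g) ^ s * qFactorial q s * qDenom_add_add_one q g s k

theorem weightedEsymm_succ (hq : q ≠ 0) (hD : ∀ n, qDenom q g n ≠ 0) (k m : ℕ) :
    weightedEsymm q g k (m + 1) = q * qDenom q g k * weightedEsymm q g (k + 1) m := by
  have hcard : m + 1 + 1 = Multiset.card ((invPowers q m).map (q⁻¹ * ·)) + 2 := by simp
  rw [weightedEsymm, invPowers_succ', hcard, Multiset.sum_range_mul_esymm_cons,
    Multiset.card_map, card_invPowers, weightedEsymm, mul_sum]
  refine sum_congr rfl fun s _ => ?_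
  rw [one_mul, weight_add_weight_succ hD, Multiset.esymm_map_mul, pow_succ, inv_pow]
  field_simp

theorem weightedEsymm_eq (hq : q ≠ 0) (hD : ∀ n, qDenom q g n ≠ 0) (m k : ℕ) :
    weightedEsymm q g k m = q ^ m / (qDenomProd q g k * qDenom q g (k + m)) := by
  induction m generalizing k with
  | zero => simp [weightedEsymm, weight, qFactorial, invPowers, qDenomProd_succ]
  | succ m ih =>
    have hP : qDenomProd q g k ≠ 0 := prod_ne_zero_iff.2 fun p _ => hD p
    rw [weightedEsymm_succ hq hD, ih, qDenomProd_succ, show k + 1 + m = k + (m + 1) by ring]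
    field_simp [hD]
    ring

theorem sum_weight_mul_esymm_invPowers (hq : q ≠ 0) (hD : ∀ n, qDenom q g n ≠ 0) (m : ℕ) :
    ∑ s ∈ range m, weight q g s 0 * (invPowers q m).esymm (s + 1) =
      ∑ d ∈ range m, (qDenom q g d)⁻¹ := by
  induction m with
  | zero => simp
  | succ m ih =>
    have hlast : (invPowers q m).esymm (m + 1) = 0 :=
      Multiset.esymm_eq_zero_of_card_lt (by simp)
    have hsmallest : ∑ s ∈ range (m + 1), weight q g s 0 * (q⁻¹ ^ m * (invPowers q m).esymm s) =
        (qDenom q g m)⁻¹ := by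
      simp_rw [mul_left_comm _ (q⁻¹ ^ m), ← mul_sum]
      rw [← weightedEsymm, weightedEsymm_eq hq hD, qDenomProd, prod_range_zero, one_mul, zero_add,
        inv_pow]
      field_simp
    simp only [invPowers_succ q m, Multiset.esymm_cons_succ, mul_add, sum_add_distrib, hsmallest]
    rw [sum_range_succ (fun s => weight q g s 0 * (invPowers q m).esymm (s + 1)), hlast, mul_zero,
      add_zero, ih, sum_range_succ]

theorem sum_powersetCard_Icc_eq_esymm_invPowers (hq : q ≠ 0) (r m : ℕ) :
    ∑ B ∈ (Icc 1 m).powersetCard r, q ^ (∑ b ∈ B, b) * (q ^ (r * m))⁻¹ =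
      (invPowers q m).esymm r := by
  have himage : (Icc 1 m).image (m - ·) = range m := by
    ext x
    simp only [mem_image, mem_Icc, mem_range]
    constructor
    · rintro ⟨b, ⟨hb, hbm⟩, rfl⟩
      omega
    · exact fun hx => ⟨m - x, ⟨by omega, by omega⟩, by omega⟩
  have hinj : Set.InjOn (m - ·) (Icc 1 m : Set ℕ) := fun a ha b hb hab => by
    simp only [coe_Icc, Set.mem_Icc] at ha hb
    simp only at hab
    omega
  have hval : invPowers q m = (Icc 1 m).val.map (fun b => q⁻¹ ^ (m - b)) := by
    rw [invPowers, ← range_val, ← himage, image_val_of_injOn hinj, Multiset.map_map]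
    rfl
  rw [hval, Finset.esymm_map_val]
  refine sum_congr rfl fun B hB => ?_
  obtain ⟨hBsub, rfl⟩ := mem_powersetCard.1 hB
  rw [← prod_pow_eq_pow_sum, pow_mul', ← prod_const, ← prod_inv_distrib, ← prod_mul_distrib]
  exact prod_congr rfl fun b hb => by rw [inv_pow_sub₀ hq (mem_Icc.1 (hBsub hb)).2, mul_comm]

end

end QAnalog

open QAnalog

theorem algebraMap_ne_zero_of_eval_ne_zero {σ R K : Type*} [CommRing R] [CommRing K]
    [Algebra (MvPolynomial σ R) K] [IsFractionRing (MvPolynomial σ R) K] {P : MvPolynomial σ R}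
    (x : σ → R) (h : eval x P ≠ 0) : algebraMap (MvPolynomial σ R) K P ≠ 0 :=
  (map_ne_zero_iff _ (IsFractionRing.injective _ K)).2 fun hP => h (by rw [hP, map_zero])

theorem qv_eq_algebraMap :
    qv = algebraMap (MvPolynomial (Fin 4) ℚ) K4 (1 + X 1 * X 2 - X 0 * X 3) := by
  simp [qv, av, bv, cv, dv]

theorem qv_ne_zero : qv ≠ 0 := by
  rw [qv_eq_algebraMap]
  exact algebraMap_ne_zero_of_eval_ne_zero (fun _ => 1) (by simp)

theorem one_sub_qv_ne_zero : 1 - qv ≠ 0 := by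
  rw [qv_eq_algebraMap, ← map_one (algebraMap (MvPolynomial (Fin 4) ℚ) K4), ← map_sub]
  exact algebraMap_ne_zero_of_eval_ne_zero ![1, 0, 0, 1] (by simp)

theorem qint_eq_qNat (n : ℕ) : qint n = qNat qv n := by
  rw [qint, div_eq_iff one_sub_qv_ne_zero]
  linear_combination qNat_mul_sub_one qv n

theorem qfact_eq_qFactorial (k : ℕ) : qfact k = qFactorial qv k := by
  simp only [qfact, qFactorial, qint_eq_qNat]

theorem qDenom_qv_ne_zero (n : ℕ) : qDenom qv (bv * cv) n ≠ 0 := by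
  have : qDenom qv (bv * cv) n = algebraMap (MvPolynomial (Fin 4) ℚ) K4
      (1 + X 1 * X 2 * ∑ i ∈ range n, (1 + X 1 * X 2 - X 0 * X 3) ^ i) := by
    simp [qDenom, qNat, qv_eq_algebraMap, bv, cv]
  rw [this]
  exact algebraMap_ne_zero_of_eval_ne_zero (fun _ => 1)
    (by simpa [add_comm] using n.cast_add_one_ne_zero)

theorem stmt7_general (m : ℕ) :
    bv⁻¹ *
      ∑ r ∈ Finset.Icc 1 m,
        ((-dv) ^ (r - 1) * qfact (r - 1) /
            ∏ p ∈ Finset.Icc 1 r, (1 + bv * cv * qint (p - 1))) *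
          av ^ r *
          ∑ B ∈ (Finset.Icc 1 m).powersetCard r,
            qv ^ (∑ b ∈ B, b) * (qv ^ (r * m))⁻¹ =
    av / bv * ∑ d ∈ Finset.range m, (1 + bv * cv * qint d)⁻¹ := by
  have hqv : qv - 1 - bv * cv = -(av * dv) := by rw [qv]; ring
  calc _ = bv⁻¹ * (av * ∑ s ∈ range m,
        weight qv (bv * cv) s 0 * (invPowers qv m).esymm (s + 1)) := by
        congr 1
        rw [sum_Icc_one_eq_sum_range, mul_sum]
        refine sum_congr rfl fun s _ => ?_
        simp only [sum_powersetCard_Icc_eq_esymm_invPowers qv_ne_zero, prod_Icc_one_eq_prod_range,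
          Nat.add_sub_cancel, qfact_eq_qFactorial, qint_eq_qNat, weight, hqv, add_zero,
          qDenomProd, qDenom]
        ring
    _ = _ := by
        rw [sum_weight_mul_esymm_invPowers qv_ne_zero qDenom_qv_ne_zero]
        simp only [qDenom, qint_eq_qNat]
        ring

/-- (1/β) ∑_{r=1}^{m} ((−δ)^{r−1}[r−1]! / ∏_{p=1}^{r}(1+βγ[p−1])) α^r
  ∑_{1≤b_1<⋯<b_r≤m} q^{∑_p (b_p − m)} = (α/β) ∑_{d=0}^{m−1} 1/(1+βγ[d]). -/
theorem stmt7 (m : ℕ) (hm : 0 < m) :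
    bv⁻¹ *
      ∑ r ∈ Finset.Icc 1 m,
        ((-dv) ^ (r - 1) * qfact (r - 1) /
            ∏ p ∈ Finset.Icc 1 r, (1 + bv * cv * qint (p - 1))) *
          av ^ r *
          ∑ B ∈ (Finset.Icc 1 m).powersetCard r,
            qv ^ (∑ b ∈ B, b) * (qv ^ (r * m))⁻¹ =
    av / bv * ∑ d ∈ Finset.range m, (1 + bv * cv * qint d)⁻¹ :=
  stmt7_general m
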